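/- For a Young diagram λ contained in the k×m rectangle with d boxes, the ℂ-linear span of the complex general-linear orbit {Λ^d(A⊗B)·v_λ : A ∈ GL(ℂ^k), B ∈ GL(ℂ^m)} inside ⋀^d_ℂ(ℂ^k ⊗ ℂ^m) equals the ℂ-linear span of the real orthogonal orbit {Λ^d(g⊗h)·v_λ : g ∈ O(k), h ∈ O(m)}, where real orthogonal matrices are regarded as complex matrices via the inclusion ℝ ⊆ ℂ. -/

import Mathlib

open TensorProduct

noncomputable section

set_option synthInstance.maxHeartbeats 400000
set_option maxHeartbeats 1000000

/-- The complex vector space `ℂ^k ⊗ ℂ^m`. -/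
abbrev TensorC (k m : ℕ) := TensorProduct ℂ (Fin k → ℂ) (Fin m → ℂ)

/-- The Schubert vector `v_λ = (e_{i₁}⊗f_{j₁}) ∧ ⋯ ∧ (e_{i_d}⊗f_{j_d})` in
`⋀^d_ℂ(ℂ^k ⊗ ℂ^m)` determined by an enumeration `c` of the cells of a Young diagram. -/
def schubertVecC (k m d : ℕ) (c : Fin d → Fin k × Fin m) : ExteriorAlgebra ℂ (TensorC k m) :=
  ExteriorAlgebra.ιMulti ℂ d fun t =>
    (Pi.single (c t).1 (1 : ℂ)) ⊗ₜ[ℂ] (Pi.single (c t).2 (1 : ℂ))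

/-- The action of a pair of complex matrices `(A, B)` on the exterior algebra of `ℂ^k ⊗ ℂ^m`
via the tensor product map `A ⊗ B`; its restriction to degree `d` is `Λ^d(A⊗B)`. -/
def actC (k m : ℕ) (A : Matrix (Fin k) (Fin k) ℂ) (B : Matrix (Fin m) (Fin m) ℂ) :
    ExteriorAlgebra ℂ (TensorC k m) →ₐ[ℂ] ExteriorAlgebra ℂ (TensorC k m) :=
  ExteriorAlgebra.map (TensorProduct.map (Matrix.toLin' A) (Matrix.toLin' B))

/-!
Let `W` be the span of the orthogonal orbit. For real matrices write `A = QR` and `B = Q'R'`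
(QR decomposition). Upper triangular matrices only rescale `v_λ`: expanding
`Λ^d(R⊗R')v_λ` multilinearly, every surviving term comes from an injective enumeration of cells
lying weakly up-left of those of `λ`, and since a Young diagram is closed under moving up-left,
that enumeration is the one of `v_λ`. Hence `W` contains `Λ^d(A⊗B)v_λ` for all real `A`, `B`.
The coordinates of `Λ^d(A⊗B)v_λ` modulo `W` are polynomials in the entries of `A` and `B`
vanishing on real points, so they vanish identically, and `W` contains the whole complex orbit.
-/

open MvPolynomial in
theorem MvPolynomial.eq_zero_of_eval_ofReal_eq_zero {σ : Type*} {P : MvPolynomial σ ℂ}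
    (h : ∀ x : σ → ℝ, eval (fun i => (x i : ℂ)) P = 0) : P = 0 := by
  refine funext_set (fun _ => Set.range Complex.ofReal)
    (fun _ => Set.infinite_range_of_injective Complex.ofReal_injective) fun x hx => ?_
  choose y hy using fun i => hx i trivial
  obtain rfl : x = fun i => (y i : ℂ) := (_root_.funext hy).symm
  exact h y

/-- Zariski density of `ℝ^σ` in `ℂ^σ`, for vectors depending polynomially on the point. -/
theorem Submodule.sum_eval_smul_mem_of_forall_real {σ ι V : Type*} [Fintype ι]
    [AddCommGroup V] [Module ℂ V] (S : Submodule ℂ V) (P : ι → MvPolynomial σ ℂ) (w : ι → V)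
    (hreal : ∀ x : σ → ℝ, ∑ j, MvPolynomial.eval (fun i => (x i : ℂ)) (P j) • w j ∈ S)
    (x : σ → ℂ) : ∑ j, MvPolynomial.eval x (P j) • w j ∈ S := by
  rw [← S.ker_mkQ, LinearMap.mem_ker, ← Module.forall_dual_apply_eq_zero_iff ℂ]
  intro φ
  let Q := ∑ j, MvPolynomial.C (φ (S.mkQ (w j))) * P j
  have hQ : ∀ y, φ (S.mkQ (∑ j, MvPolynomial.eval y (P j) • w j)) = MvPolynomial.eval y Q := by
    intro y
    simp [Q, mul_comm]
  rw [hQ, MvPolynomial.eq_zero_of_eval_ofReal_eq_zero (P := Q) fun y => ?_, map_zero]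
  rw [← hQ, S.mkQ_apply, (Submodule.Quotient.mk_eq_zero S).2 (hreal y), map_zero]

/-- Both `p` and `c` enumerate all of `μ`, so their sums of `i + j` agree, and termwise
inequality between equal sums forces equality. -/
theorem YoungDiagram.eq_of_le_of_injective {ι : Type*} [Fintype ι] (μ : YoungDiagram)
    (hcard : μ.card = Fintype.card ι) {c p : ι → ℕ × ℕ} (hc : Function.Injective c)
    (hcμ : ∀ t, c t ∈ μ) (hp : Function.Injective p) (hpc : p ≤ c) : p = c := by
  have sum_eq : ∀ f : ι → ℕ × ℕ, Function.Injective f → (∀ t, f t ∈ μ) →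
      ∑ t, ((f t).1 + (f t).2) = ∑ x ∈ μ.cells, (x.1 + x.2) := by
    intro f hf hfμ
    have himage : Finset.univ.image f = μ.cells :=
      Finset.eq_of_subset_of_card_le (fun x hx => by
        obtain ⟨t, -, rfl⟩ := Finset.mem_image.1 hx; exact hfμ t)
        (by rw [Finset.card_image_of_injective _ hf, Finset.card_univ]; exact hcard.le)
    rw [← himage, Finset.sum_image fun a _ b _ h => hf h]
  have hpμ : ∀ t, p t ∈ μ := fun t => μ.isLowerSet (hpc t) (hcμ t)
  have hsum := (sum_eq p hp hpμ).trans (sum_eq c hc hcμ).symm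
  have hle : ∀ t ∈ Finset.univ, (p t).1 + (p t).2 ≤ (c t).1 + (c t).2 :=
    fun t _ => add_le_add (hpc t).1 (hpc t).2
  funext t
  have heq := (Finset.sum_eq_sum_iff_of_le hle).1 hsum t (Finset.mem_univ t)
  obtain ⟨h₁, h₂⟩ := hpc t
  exact Prod.ext (by omega) (by omega)

/-- QR decomposition, by Gram–Schmidt applied to the columns of `A`. -/
theorem Matrix.exists_mem_orthogonalGroup_mul_isUpperTriangular {ι : Type*} [Fintype ι]
    [LinearOrder ι] [LocallyFiniteOrderBot ι] (A : Matrix ι ι ℝ) :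
    ∃ Q ∈ Matrix.orthogonalGroup ι ℝ, ∃ R : Matrix ι ι ℝ, R.IsUpperTriangular ∧ A = Q * R := by
  let e := EuclideanSpace.basisFun ι ℝ
  let f : ι → EuclideanSpace ℝ ι := fun j => WithLp.toLp 2 (fun i => A i j)
  let b := InnerProductSpace.gramSchmidtOrthonormalBasis (finrank_euclideanSpace (𝕜 := ℝ)) f
  refine ⟨e.toBasis.toMatrix b, e.toMatrix_orthonormalBasis_mem_orthogonal b, b.toBasis.toMatrix f,
    InnerProductSpace.gramSchmidtOrthonormalBasis_inv_isUpperTriangular _ f, ?_⟩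
  rw [← b.coe_toBasis, Module.Basis.toMatrix_mul_toMatrix]
  ext i j
  simp [Module.Basis.toMatrix_apply, e, f]

theorem Matrix.toLin'_single_one {R n : Type*} [CommSemiring R] [Fintype n] [DecidableEq n]
    (A : Matrix n n R) (i : n) :
    Matrix.toLin' A (Pi.single i 1) = ∑ r, A r i • Pi.single r 1 := by
  ext j
  simp [Pi.single_apply]

theorem map_toLin'_single_tmul_single {k m : ℕ} (A : Matrix (Fin k) (Fin k) ℂ)
    (B : Matrix (Fin m) (Fin m) ℂ) (i : Fin k) (j : Fin m) :
    TensorProduct.map (Matrix.toLin' A) (Matrix.toLin' B)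
        (Pi.single i (1 : ℂ) ⊗ₜ[ℂ] Pi.single j (1 : ℂ))
      = ∑ q : Fin k × Fin m,
          (A q.1 i * B q.2 j) • (Pi.single q.1 (1 : ℂ) ⊗ₜ[ℂ] Pi.single q.2 (1 : ℂ)) := by
  rw [TensorProduct.map_tmul, Matrix.toLin'_single_one, Matrix.toLin'_single_one,
    TensorProduct.sum_tmul, Fintype.sum_prod_type]
  simp_rw [TensorProduct.tmul_sum, TensorProduct.smul_tmul_smul]

theorem actC_mul_mul {k m : ℕ} (A A' : Matrix (Fin k) (Fin k) ℂ)
    (B B' : Matrix (Fin m) (Fin m) ℂ) (x : ExteriorAlgebra ℂ (TensorC k m)) :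
    actC k m (A * A') (B * B') x = actC k m A B (actC k m A' B' x) := by
  simp only [actC, Matrix.toLin'_mul, TensorProduct.map_comp, ← ExteriorAlgebra.map_comp_map,
    AlgHom.comp_apply]

theorem actC_schubertVecC {k m d : ℕ} (A : Matrix (Fin k) (Fin k) ℂ)
    (B : Matrix (Fin m) (Fin m) ℂ) (c : Fin d → Fin k × Fin m) :
    actC k m A B (schubertVecC k m d c)
      = ∑ p : Fin d → Fin k × Fin m,
          (∏ t, A (p t).1 (c t).1 * B (p t).2 (c t).2) • schubertVecC k m d p := by
  simp only [actC, schubertVecC, ExteriorAlgebra.map_apply_ιMulti, Function.comp_def,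
    map_toLin'_single_tmul_single]
  exact ((ExteriorAlgebra.ιMulti ℂ d).toMultilinearMap.map_sum _).trans
    (Finset.sum_congr rfl fun p _ => (ExteriorAlgebra.ιMulti ℂ d).map_smul_univ _ _)

theorem actC_schubertVecC_mem_of_forall_ofReal {k m d : ℕ} (c : Fin d → Fin k × Fin m)
    (S : Submodule ℂ (ExteriorAlgebra ℂ (TensorC k m)))
    (hreal : ∀ (A₀ : Matrix (Fin k) (Fin k) ℝ) (B₀ : Matrix (Fin m) (Fin m) ℝ),
      actC k m (A₀.map fun x => (x : ℂ)) (B₀.map fun x => (x : ℂ)) (schubertVecC k m d c) ∈ S)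
    (A : Matrix (Fin k) (Fin k) ℂ) (B : Matrix (Fin m) (Fin m) ℂ) :
    actC k m A B (schubertVecC k m d c) ∈ S := by
  let entries : Matrix (Fin k) (Fin k) ℂ → Matrix (Fin m) (Fin m) ℂ →
      (Fin k × Fin k) ⊕ (Fin m × Fin m) → ℂ :=
    fun A B => Sum.elim (fun q => A q.1 q.2) (fun q => B q.1 q.2)
  let P : (Fin d → Fin k × Fin m) → MvPolynomial ((Fin k × Fin k) ⊕ (Fin m × Fin m)) ℂ :=
    fun p => ∏ t, MvPolynomial.X (Sum.inl ((p t).1, (c t).1)) *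
      MvPolynomial.X (Sum.inr ((p t).2, (c t).2))
  have hP : ∀ A B, actC k m A B (schubertVecC k m d c)
      = ∑ p, MvPolynomial.eval (entries A B) (P p) • schubertVecC k m d p := by
    intro A B
    simp [actC_schubertVecC, P, entries]
  rw [hP]
  refine S.sum_eval_smul_mem_of_forall_real P _ (fun x => ?_) _
  convert hreal (Matrix.of fun a b => x (Sum.inl (a, b))) (Matrix.of fun a b => x (Sum.inr (a, b)))
  rw [hP]
  congr! with p _ i
  cases i <;> rfl

/-- In the expansion `actC_schubertVecC` only enumerations `p ≤ c` survive, and among the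
injective ones only `c`, by `YoungDiagram.eq_of_le_of_injective`. -/
theorem actC_schubertVecC_of_isUpperTriangular {k m d : ℕ} (lam : YoungDiagram)
    (hcard : lam.card = d) (c : Fin d → Fin k × Fin m) (hcinj : Function.Injective c)
    (hcmem : ∀ t, (((c t).1 : ℕ), ((c t).2 : ℕ)) ∈ lam.cells)
    {U : Matrix (Fin k) (Fin k) ℂ} {U' : Matrix (Fin m) (Fin m) ℂ}
    (hU : U.IsUpperTriangular) (hU' : U'.IsUpperTriangular) :
    actC k m U U' (schubertVecC k m d c)
      = (∏ t, U (c t).1 (c t).1 * U' (c t).2 (c t).2) • schubertVecC k m d c := by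
  rw [actC_schubertVecC, Finset.sum_eq_single_of_mem c (Finset.mem_univ c)]
  intro p _ hpc
  by_cases hp : Function.Injective p
  swap
  · rw [schubertVecC, AlternatingMap.map_eq_zero_of_not_injective _ _ fun h => hp fun t t' htt' =>
      h (by rw [htt']), smul_zero]
  refine smul_eq_zero_of_left (Finset.prod_eq_zero_iff.2 ?_) _
  by_contra! hne
  have hval : Function.Injective (Prod.map Fin.val Fin.val : Fin k × Fin m → ℕ × ℕ) :=
    Fin.val_injective.prodMap Fin.val_injective
  refine hpc (hval.comp_left (lam.eq_of_le_of_injective (by simp [hcard]) (hval.comp hcinj)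
    hcmem (hval.comp hp) fun t => ?_))
  obtain ⟨h₁, h₂⟩ := mul_ne_zero_iff.1 (hne t (Finset.mem_univ t))
  exact ⟨not_lt.1 (mt (@hU _ _) h₁), not_lt.1 (mt (@hU' _ _) h₂)⟩

theorem actC_ofReal_schubertVecC_mem_span {k m d : ℕ} (lam : YoungDiagram)
    (hcard : lam.card = d) (c : Fin d → Fin k × Fin m) (hcinj : Function.Injective c)
    (hcmem : ∀ t, (((c t).1 : ℕ), ((c t).2 : ℕ)) ∈ lam.cells)
    (A₀ : Matrix (Fin k) (Fin k) ℝ) (B₀ : Matrix (Fin m) (Fin m) ℝ) :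
    actC k m (A₀.map fun x => (x : ℂ)) (B₀.map fun x => (x : ℂ)) (schubertVecC k m d c)
      ∈ Submodule.span ℂ {w | ∃ g ∈ Matrix.orthogonalGroup (Fin k) ℝ,
          ∃ h ∈ Matrix.orthogonalGroup (Fin m) ℝ,
          w = actC k m (g.map fun x => (x : ℂ)) (h.map fun x => (x : ℂ))
                (schubertVecC k m d c)} := by
  obtain ⟨Q, hQ, R, hR, rfl⟩ := A₀.exists_mem_orthogonalGroup_mul_isUpperTriangular
  obtain ⟨Q', hQ', R', hR', rfl⟩ := B₀.exists_mem_orthogonalGroup_mul_isUpperTriangular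
  have map_mul : ∀ {n : ℕ} (M N : Matrix (Fin n) (Fin n) ℝ),
      (M * N).map (fun x => (x : ℂ)) = M.map (fun x => (x : ℂ)) * N.map (fun x => (x : ℂ)) :=
    fun M N => Matrix.map_mul (f := Complex.ofRealHom)
  rw [map_mul, map_mul, actC_mul_mul, actC_schubertVecC_of_isUpperTriangular lam hcard c hcinj hcmem
      (U := R.map fun x => (x : ℂ)) (U' := R'.map fun x => (x : ℂ))
      (hR.map Complex.ofRealHom) (hR'.map Complex.ofRealHom), map_smul]
  exact Submodule.smul_mem _ _ (Submodule.subset_span ⟨Q, hQ, Q', hQ', rfl⟩)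

theorem stmt_6_general (k m d : ℕ)
    (lam : YoungDiagram) (hcard : lam.card = d)
    (c : Fin d → Fin k × Fin m) (hcinj : Function.Injective c)
    (hcmem : ∀ t, (((c t).1 : ℕ), ((c t).2 : ℕ)) ∈ lam.cells) :
    Submodule.span ℂ {w | ∃ A : Matrix (Fin k) (Fin k) ℂ, ∃ B : Matrix (Fin m) (Fin m) ℂ,
        IsUnit A ∧ IsUnit B ∧ w = actC k m A B (schubertVecC k m d c)}
      = Submodule.span ℂ {w | ∃ g ∈ Matrix.orthogonalGroup (Fin k) ℝ,
          ∃ h ∈ Matrix.orthogonalGroup (Fin m) ℝ,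
          w = actC k m (g.map fun x => (x : ℂ)) (h.map fun x => (x : ℂ))
                (schubertVecC k m d c)} := by
  apply le_antisymm <;> rw [Submodule.span_le]
  · rintro _ ⟨A, B, -, -, rfl⟩
    exact actC_schubertVecC_mem_of_forall_ofReal c _
      (actC_ofReal_schubertVecC_mem_span lam hcard c hcinj hcmem) A B
  · rintro _ ⟨g, hg, h, hh, rfl⟩
    refine Submodule.subset_span ⟨_, _, ?_, ?_, rfl⟩
    · exact (Unitary.isUnit_coe (U := ⟨g, hg⟩)).map Complex.ofRealHom.mapMatrix
    · exact (Unitary.isUnit_coe (U := ⟨h, hh⟩)).map Complex.ofRealHom.mapMatrix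

/-- The `ℂ`-linear span of the complex general-linear orbit
`{Λ^d(A⊗B)·v_λ : A ∈ GL(ℂ^k), B ∈ GL(ℂ^m)}` inside `⋀^d_ℂ(ℂ^k ⊗ ℂ^m)` equals the `ℂ`-linear
span of the real orthogonal orbit `{Λ^d(g⊗h)·v_λ : g ∈ O(k), h ∈ O(m)}`, where real
orthogonal matrices are regarded as complex matrices entrywise via `ℝ ⊆ ℂ`. -/
theorem stmt_6 (k m d : ℕ) (hk : 1 ≤ k) (hm : 1 ≤ m)
    (lam : YoungDiagram) (hcard : lam.card = d)
    (hrect : ∀ x ∈ lam.cells, x.1 < k ∧ x.2 < m)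
    (c : Fin d → Fin k × Fin m) (hcinj : Function.Injective c)
    (hcmem : ∀ t, (((c t).1 : ℕ), ((c t).2 : ℕ)) ∈ lam.cells) :
    Submodule.span ℂ {w | ∃ A : Matrix (Fin k) (Fin k) ℂ, ∃ B : Matrix (Fin m) (Fin m) ℂ,
        IsUnit A ∧ IsUnit B ∧ w = actC k m A B (schubertVecC k m d c)}
      = Submodule.span ℂ {w | ∃ g ∈ Matrix.orthogonalGroup (Fin k) ℝ,
          ∃ h ∈ Matrix.orthogonalGroup (Fin m) ℝ,
          w = actC k m (g.map fun x => (x : ℂ)) (h.map fun x => (x : ℂ))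
                (schubertVecC k m d c)} :=
  stmt_6_general k m d lam hcard c hcinj hcmem

end
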